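/- Let ξ be an ordinal and T = {(γᵢ)ᵢ₌₁ᵏ : ω^ξ > γ₁ > ⋯ > γ_k} the tree of strictly decreasing finite sequences of ordinals below ω^ξ. Then for every ordinal γ ≤ ω^ξ, the γ-th derived tree satisfies T^γ = {(γᵢ)ᵢ₌₁ᵏ : ω^ξ > γ₁ > ⋯ > γ_k ≥ γ}, and consequently o(T) = ω^ξ. -/

import Mathlib

open Ordinal Filter

namespace PaperAUS

/-- A tree on `Λ`: a set of nonempty finite sequences closed under nonempty initial segments. -/
def IsTree {Λ : Type*} (T : Set (List Λ)) : Prop :=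
  [] ∉ T ∧ ∀ s t : List Λ, t ∈ T → s <+: t → s ≠ [] → s ∈ T

/-- The maximal nodes of `T`: those with no proper extension in `T`. -/
def maxNodes {Λ : Type*} (T : Set (List Λ)) : Set (List Λ) :=
  {t ∈ T | ∀ s ∈ T, t <+: s → s = t}

/-- Transfinite derivatives of a tree, removing maximal nodes at each step. -/
noncomputable def derivIter {Λ : Type*} (T : Set (List Λ)) (ξ : Ordinal) : Set (List Λ) :=
  Ordinal.limitRecOn ξ T (fun _ ih => ih \ maxNodes ih)
    (fun o _ ih => ⋂ ζ : Set.Iio o, ih ζ ζ.2)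

/-- The rank `o(T)` of a (well-founded) tree: least `ξ` with `T^ξ = ∅`. -/
noncomputable def treeRank {Λ : Type*} (T : Set (List Λ)) : Ordinal :=
  sInf {ξ | derivIter T ξ = ∅}

/-- `T.D`: the tree of sequences of pairs whose first coordinates form a member of `T`. -/
def TD {Λ : Type*} (T : Set (List Λ)) (D : Type*) : Set (List (Λ × D)) :=
  {l | l.map Prod.fst ∈ T}

/-- `r` is (the order of) a directed set. -/
def IsDirSys {D : Type*} (r : D → D → Prop) : Prop :=
  (∀ a, r a a) ∧ (∀ a b c, r a b → r b c → r a c) ∧ ∀ a b, ∃ c, r a c ∧ r b c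

/-- The filter of eventual sections of a directed order, used to express convergence of nets. -/
def netFilter {D : Type*} (r : D → D → Prop) : Filter D :=
  ⨅ a, Filter.principal {b | r a b}

/-- A collection `(x_t)_{t ∈ T.D}` is weakly null: along every family of immediate successor
nodes, the corresponding net is weakly null. -/
def WeaklyNullColl {Λ D : Type*} {X : Type*} [NormedAddCommGroup X] [NormedSpace ℝ X]
    (T : Set (List Λ)) (r : D → D → Prop) (x : List (Λ × D) → X) : Prop :=
  ∀ (t : List (Λ × D)) (ζ : Λ), (∀ u : D, t ++ [(ζ, u)] ∈ TD T D) →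
    ∀ f : X →L[ℝ] ℝ, Tendsto (fun u : D => f (x (t ++ [(ζ, u)]))) (netFilter r) (nhds 0)

/-- The set `{x_s : ∅ < s ≤ t}` of members of the collection along the branch below `t`. -/
def branchSet {Λ D : Type*} {X : Type*} (x : List (Λ × D) → X) (t : List (Λ × D)) : Set X :=
  {v | ∃ s, s ≠ [] ∧ s <+: t ∧ v = x s}

/-- The `ξ`-asymptotic smoothness modulus `ϱ_ξ(σ, A)` of an operator. -/
noncomputable def rho {X Y : Type*} [NormedAddCommGroup X] [NormedSpace ℝ X]
    [NormedAddCommGroup Y] [NormedSpace ℝ Y] (ξ : Ordinal) (A : X →L[ℝ] Y) (σ : ℝ) : ℝ :=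
  sSup {ρ : ℝ | ∃ (Λ D : Type) (r : D → D → Prop) (T : Set (List Λ))
    (y : Y) (x : List (Λ × D) → X),
    Nonempty D ∧ IsDirSys r ∧ IsTree T ∧ treeRank T = omega0 ^ ξ ∧
    ‖y‖ ≤ 1 ∧ (∀ t ∈ TD T D, ‖x t‖ ≤ σ) ∧ WeaklyNullColl T r x ∧
    ρ = sInf {c : ℝ | ∃ t ∈ TD T D, ∃ v ∈ convexHull ℝ (branchSet x t), c = ‖y + A v‖ - 1}}

end PaperAUS
namespace PaperAUS

/-- The tree of strictly decreasing finite sequences of ordinals below `ω^ξ`. -/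
def decTree (ξ : Ordinal) : Set (List Ordinal) :=
  {l | l ≠ [] ∧ l.Chain' (· > ·) ∧ ∀ a ∈ l, a < omega0 ^ ξ}

/-! Write `D(γ, b)` (`decTreeIco γ b`) for the tree of strictly decreasing sequences with
entries in `[γ, b)`, so that `T = D(0, ω^ξ)`. A node `l` of `D(γ, b)` has a proper extension iff
`l ++ [γ]` is one, i.e. iff all its entries exceed `γ`; hence removing the maximal nodes of
`D(γ, b)` leaves `D(γ + 1, b)`. At limits `⋂_{ζ < γ} D(ζ, b) = D(γ, b)`, so `T^γ = D(γ, b)` for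
every `γ`. As `D(γ, b)` is empty exactly when `b ≤ γ`, the rank is `b`. -/

def decTreeIco (γ b : Ordinal) : Set (List Ordinal) :=
  {l | l ≠ [] ∧ l.IsChain (· > ·) ∧ ∀ a ∈ l, γ ≤ a ∧ a < b}

section derivIter

variable {Λ : Type*} (T : Set (List Λ))

lemma derivIter_zero : derivIter T 0 = T := by
  rw [derivIter, Ordinal.limitRecOn_zero]

lemma derivIter_add_one (o : Ordinal) :
    derivIter T (o + 1) = derivIter T o \ maxNodes (derivIter T o) := by
  rw [derivIter, Ordinal.limitRecOn_add_one]
  rfl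

lemma derivIter_limit {o : Ordinal} (ho : Order.IsSuccLimit o) :
    derivIter T o = ⋂ ζ : Set.Iio o, derivIter T ζ := by
  rw [derivIter, Ordinal.limitRecOn_limit _ _ _ _ ho]
  rfl

end derivIter

section decTreeIco

variable {γ δ b : Ordinal} {l s : List Ordinal}

lemma mem_decTreeIco_iff_pairwise :
    l ∈ decTreeIco γ b ↔ l ≠ [] ∧ l.Pairwise (· > ·) ∧ ∀ a ∈ l, γ ≤ a ∧ a < b :=
  and_congr_right' (and_congr_left' List.isChain_iff_pairwise)

lemma decTreeIco_subset_of_le (h : δ ≤ γ) : decTreeIco γ b ⊆ decTreeIco δ b :=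
  fun _ ⟨hne, hdec, hmem⟩ => ⟨hne, hdec, fun a ha => ⟨h.trans (hmem a ha).1, (hmem a ha).2⟩⟩

lemma append_singleton_mem_decTreeIco (hl : l ∈ decTreeIco (γ + 1) b) :
    l ++ [γ] ∈ decTreeIco γ b := by
  obtain ⟨hne, hdec, hmem⟩ := mem_decTreeIco_iff_pairwise.mp hl
  have hγl : ∀ a ∈ l, γ < a := fun a ha => Order.add_one_le_iff.mp (hmem a ha).1
  refine mem_decTreeIco_iff_pairwise.mpr ⟨by simp, ?_, ?_⟩
  · simpa [List.pairwise_append, hdec] using hγl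
  · simp only [List.mem_append, List.mem_singleton]
    rintro a (ha | rfl)
    · exact ⟨(hγl a ha).le, (hmem a ha).2⟩
    · exact ⟨le_rfl, (hγl _ (List.getLast_mem hne)).trans (hmem _ (List.getLast_mem hne)).2⟩

lemma mem_decTreeIco_add_one_of_isPrefix (hl : l ∈ decTreeIco γ b) (hs : s ∈ decTreeIco γ b)
    (hpre : l <+: s) (hne : s ≠ l) : l ∈ decTreeIco (γ + 1) b := by
  obtain ⟨u, rfl⟩ := hpre
  obtain ⟨c, hc⟩ : ∃ c, c ∈ u := List.exists_mem_of_ne_nil u (by rintro rfl; simp at hne)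
  obtain ⟨-, hsdec, hsmem⟩ := mem_decTreeIco_iff_pairwise.mp hs
  refine ⟨hl.1, hl.2.1, fun a ha => ⟨?_, (hl.2.2 a ha).2⟩⟩
  have hca : c < a := (List.pairwise_append.mp hsdec).2.2 a ha c hc
  exact Order.add_one_le_of_lt ((hsmem c (by simp [hc])).1.trans_lt hca)

lemma decTreeIco_diff_maxNodes :
    decTreeIco γ b \ maxNodes (decTreeIco γ b) = decTreeIco (γ + 1) b := by
  ext l
  simp only [maxNodes, Set.mem_sdiff, Set.mem_sep_iff, not_and, not_forall]
  constructor
  · rintro ⟨hl, hnotmax⟩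
    obtain ⟨s, hs, hpre, hne⟩ := hnotmax hl
    exact mem_decTreeIco_add_one_of_isPrefix hl hs hpre hne
  · intro hl
    refine ⟨decTreeIco_subset_of_le (Order.le_succ γ) hl, fun _ => ?_⟩
    exact ⟨l ++ [γ], append_singleton_mem_decTreeIco hl, List.prefix_append l [γ], by simp⟩

lemma iInter_decTreeIco_of_isSuccLimit (hγ : Order.IsSuccLimit γ) :
    ⋂ ζ : Set.Iio γ, decTreeIco ζ b = decTreeIco γ b := by
  refine subset_antisymm (fun l hl => ?_) (Set.subset_iInter fun ζ => decTreeIco_subset_of_le ζ.2.le)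
  have hmem : ∀ ζ < γ, l ∈ decTreeIco ζ b := fun ζ hζ => Set.mem_iInter.mp hl ⟨ζ, hζ⟩
  obtain ⟨hne, hdec, hbound⟩ := hmem 0 hγ.bot_lt
  refine ⟨hne, hdec, fun a ha => ⟨not_lt.mp fun haγ => ?_, (hbound a ha).2⟩⟩
  exact (lt_add_one a).not_ge ((hmem (a + 1) (hγ.add_one_lt haγ)).2.2 a ha).1

lemma derivIter_decTreeIco_zero (b γ : Ordinal) :
    derivIter (decTreeIco 0 b) γ = decTreeIco γ b := by
  induction γ using Ordinal.limitRecOn with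
  | zero => exact derivIter_zero _
  | add_one γ ih => rw [derivIter_add_one, ih, decTreeIco_diff_maxNodes]
  | limit γ hγ ih =>
    rw [derivIter_limit _ hγ, ← iInter_decTreeIco_of_isSuccLimit hγ]
    exact Set.iInter_congr fun ζ => ih ζ ζ.2

lemma decTreeIco_eq_empty_iff : decTreeIco γ b = ∅ ↔ b ≤ γ := by
  refine ⟨fun h => not_lt.mp fun hγb => ?_, fun h => Set.eq_empty_of_forall_notMem ?_⟩
  · exact Set.eq_empty_iff_forall_notMem.mp h [γ]
      ⟨by simp, List.isChain_singleton γ, by simp [hγb]⟩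
  · rintro l ⟨hne, -, hmem⟩
    obtain ⟨hγa, hab⟩ := hmem _ (List.head_mem hne)
    exact (hab.trans_le (h.trans hγa)).false

lemma treeRank_decTreeIco_zero (b : Ordinal) : treeRank (decTreeIco 0 b) = b := by
  simp only [treeRank, derivIter_decTreeIco_zero, decTreeIco_eq_empty_iff]
  exact csInf_Ici

end decTreeIco

lemma decTree_eq_decTreeIco (ξ : Ordinal) : decTree ξ = decTreeIco 0 (omega0 ^ ξ) := by
  ext l
  simp only [decTree, decTreeIco, Set.mem_ofPred_eq, zero_le, true_and]
  rfl

/-- the derived trees of the decreasing-sequence tree, and its rank `ω^ξ`. -/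
theorem derivIter_decTree (ξ : Ordinal) :
    (∀ γ ≤ omega0 ^ ξ, derivIter (decTree ξ) γ =
      {l | l ≠ [] ∧ l.Chain' (· > ·) ∧ ∀ a ∈ l, γ ≤ a ∧ a < omega0 ^ ξ}) ∧
    treeRank (decTree ξ) = omega0 ^ ξ := by
  rw [decTree_eq_decTreeIco]
  exact ⟨fun γ _ => derivIter_decTreeIco_zero _ γ, treeRank_decTreeIco_zero _⟩

end PaperAUS
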